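/- arXiv:1403.0710 — 3 statements merged into one kernel-verified Lean document; each statement's English description precedes it below -/
import Mathlib

section
/- (Diego's theorem, syntactic form.) For every n, there are only finitely many (∧,→)-formulas over the variables p_1, …, p_n up to semantic equivalence: the quotient of the set of (∧,→)-formulas over n variables by the relation 'φ ≡ ψ if and only if for every model M on n variables and every x ∈ M, M, x ⊨ φ ⟺ M, x ⊨ ψ' is a finite set. -/
/-- `(∧,→)`-formulas over `n` propositional variables. -/
inductive MeetImpForm (n : ℕ) : Type
  | var (i : Fin n) : MeetImpForm n
  | and (φ ψ : MeetImpForm n) : MeetImpForm n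
  | imp (φ ψ : MeetImpForm n) : MeetImpForm n

/-- A Kripke model on `n` variables: a poset with a monotone colouring into
`Fin n → Bool` (pointwise order, `false < true`). -/
structure KripkeModel (n : ℕ) where
  W : Type
  [ord : PartialOrder W]
  col : W → Fin n → Bool
  mono : Monotone col

attribute [instance] KripkeModel.ord

/-- Kripke satisfaction of a `(∧,→)`-formula in a model. -/
def MeetImpSat {n : ℕ} (M : KripkeModel n) : MeetImpForm n → M.W → Prop
  | .var i, x => M.col x i = true
  | .and φ ψ, x => MeetImpSat M φ x ∧ MeetImpSat M ψ x
  | .imp φ ψ, x => ∀ y : M.W, x ≤ y → MeetImpSat M φ y → MeetImpSat M ψ y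

/-!
If `Θ` is a theory (a set of formulas closed under finitary semantic consequence) and `χ ∉ Θ`,
then `χ` fails, with all of `Θ` true, at the root of a coloured tree whose height is the number
of variables missing from `Θ`. For a variable `pᵢ ∉ Θ`, enlarge `Θ` by Zorn's lemma to a theory
`Θm` maximal with `pᵢ ∉ Θm`; then `Θ' = Cn (Θm ∪ {pᵢ})` misses fewer variables, so by induction
every `ξ ∉ Θ'` fails at a lower tree satisfying `Θ'`. Maximality makes the node coloured by `Θm`
with all these trees below it satisfy exactly `Θm`. Hence a formula is determined up to
equivalence by where it holds on the finitely many trees of height `n`.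
-/

open Set

variable {n : ℕ} {φ ψ : MeetImpForm n}

theorem MeetImpSat.monotone (M : KripkeModel n) (φ : MeetImpForm n) :
    Monotone (MeetImpSat M φ) := by
  intro x y hxy
  induction φ with
  | var i => exact fun hx => Bool.le_iff_imp.mp (M.mono hxy i) hx
  | and φ ψ ihφ ihψ => exact fun hx => ⟨ihφ hx.1, ihψ hx.2⟩
  | imp φ ψ _ _ => exact fun hx z hz => hx z (hxy.trans hz)

namespace MeetImpForm

def Entails (Γ : Set (MeetImpForm n)) (φ : MeetImpForm n) : Prop :=
  ∀ (M : KripkeModel n) (x : M.W), (∀ γ ∈ Γ, MeetImpSat M γ x) → MeetImpSat M φ x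

def Cn (S : Set (MeetImpForm n)) : Set (MeetImpForm n) :=
  {φ | ∃ Γ ⊆ S, Γ.Finite ∧ Entails Γ φ}

def IsTheory (T : Set (MeetImpForm n)) : Prop := Cn T ⊆ T

variable {S T : Set (MeetImpForm n)}

theorem subset_Cn (S : Set (MeetImpForm n)) : S ⊆ Cn S :=
  fun φ hφ => ⟨{φ}, singleton_subset_iff.2 hφ, finite_singleton φ, fun _ _ h => h φ rfl⟩

theorem Cn_mono (h : S ⊆ T) : Cn S ⊆ Cn T :=
  fun _ ⟨Γ, hΓ, hfin, hφ⟩ => ⟨Γ, hΓ.trans h, hfin, hφ⟩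

theorem isTheory_Cn (S : Set (MeetImpForm n)) : IsTheory (Cn S) := by
  rintro φ ⟨Γ, hΓ, hfin, hφ⟩
  choose Δ hΔS hΔfin hΔ using fun γ (hγ : γ ∈ Γ) => hΓ hγ
  refine ⟨⋃ γ ∈ Γ, Δ γ ‹_›, iUnion₂_subset hΔS, hfin.biUnion' hΔfin, fun M x hx => ?_⟩
  exact hφ M x fun γ hγ => hΔ γ hγ M x fun δ hδ => hx δ (mem_iUnion₂_of_mem hγ hδ)

theorem isTheory_setOf_meetImpSat (M : KripkeModel n) (x : M.W) :
    IsTheory {φ | MeetImpSat M φ x} :=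
  fun _ ⟨_, hΓ, _, hφ⟩ => hφ M x hΓ

theorem isTheory_sUnion {c : Set (Set (MeetImpForm n))} (hc : IsChain (· ⊆ ·) c)
    (hne : c.Nonempty) (hT : ∀ T ∈ c, IsTheory T) : IsTheory (⋃₀ c) := by
  rintro φ ⟨Γ, hΓ, hfin, hφ⟩
  obtain ⟨T, hTc, hΓT⟩ := hc.directedOn.exists_mem_subset_of_finite_of_subset_sUnion hne hfin hΓ
  exact mem_sUnion_of_mem (hT T hTc ⟨Γ, hΓT, hfin, hφ⟩) hTc

namespace IsTheory

theorem Cn_subset (hT : IsTheory T) (h : S ⊆ T) : Cn S ⊆ T := (Cn_mono h).trans hT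

theorem mem_of_entails (hT : IsTheory T) {Γ : Set (MeetImpForm n)} (hΓ : Γ ⊆ T)
    (hfin : Γ.Finite) (h : Entails Γ φ) : φ ∈ T :=
  hT ⟨Γ, hΓ, hfin, h⟩

theorem and_mem_iff (hT : IsTheory T) : φ.and ψ ∈ T ↔ φ ∈ T ∧ ψ ∈ T := by
  refine ⟨fun h => ⟨?_, ?_⟩, fun ⟨hφ, hψ⟩ => ?_⟩
  · exact hT.mem_of_entails (singleton_subset_iff.2 h) (finite_singleton _)
      fun _ _ hx => (hx _ rfl).1
  · exact hT.mem_of_entails (singleton_subset_iff.2 h) (finite_singleton _)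
      fun _ _ hx => (hx _ rfl).2
  · exact hT.mem_of_entails (insert_subset hφ (singleton_subset_iff.2 hψ)) (toFinite _)
      fun _ _ hx => ⟨hx φ (mem_insert _ _), hx ψ (mem_insert_of_mem _ rfl)⟩

theorem mem_of_imp_mem (hT : IsTheory T) (hφ : φ ∈ T) (h : φ.imp ψ ∈ T) : ψ ∈ T :=
  hT.mem_of_entails (insert_subset hφ (singleton_subset_iff.2 h)) (toFinite _)
    fun _ x hx => hx _ (mem_insert_of_mem _ rfl) x le_rfl (hx φ (mem_insert _ _))

theorem imp_mem_of_mem_Cn_insert (hT : IsTheory T) (h : ψ ∈ Cn (insert φ T)) :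
    φ.imp ψ ∈ T := by
  obtain ⟨Γ, hΓ, hfin, hψ⟩ := h
  refine hT.mem_of_entails (sdiff_singleton_subset_iff.2 hΓ) hfin.sdiff ?_
  intro M x hx y hxy hφ
  refine hψ M y fun γ hγ => ?_
  by_cases hγφ : γ = φ
  · exact hγφ ▸ hφ
  · exact MeetImpSat.monotone M γ hxy (hx γ ⟨hγ, hγφ⟩)

theorem exists_maximal_notMem (hT : IsTheory T) (hφ : φ ∉ T) :
    ∃ T', IsTheory T' ∧ T ⊆ T' ∧ φ ∉ T' ∧ ∀ α ∉ T', φ ∈ Cn (insert α T') := by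
  obtain ⟨T', hTT', ⟨hT', hφT'⟩, hmax⟩ := zorn_subset_nonempty {T | IsTheory T ∧ φ ∉ T}
    (fun c hcS hc hne => ⟨⋃₀ c, ⟨isTheory_sUnion hc hne fun T hT => (hcS hT).1,
      fun h => (mem_sUnion.1 h).elim fun T ⟨hTc, hφT⟩ => (hcS hTc).2 hφT⟩,
      fun _ => subset_sUnion_of_mem⟩) T ⟨hT, hφ⟩
  refine ⟨T', hT', hTT', hφT', fun α hα => by_contra fun h => hα ?_⟩
  have hle := hmax ⟨isTheory_Cn _, h⟩ ((subset_insert α T').trans (subset_Cn _))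
  exact hle (subset_Cn _ (mem_insert α T'))

end IsTheory

noncomputable def deficit (T : Set (MeetImpForm n)) : ℕ := {i : Fin n | var i ∉ T}.ncard

theorem deficit_le (T : Set (MeetImpForm n)) : deficit T ≤ n :=
  (ncard_le_card _).trans (Nat.card_fin n).le

theorem deficit_anti (h : S ⊆ T) : deficit T ≤ deficit S :=
  ncard_le_ncard fun _ hi hS => hi (h hS)

theorem deficit_lt {i : Fin n} (h : S ⊆ T) (hS : var i ∉ S) (hT : var i ∈ T) :
    deficit T < deficit S :=
  ncard_lt_ncard ⟨fun _ hj hS => hj (h hS), fun hsub => hsub hS hT⟩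

theorem deficit_pos {i : Fin n} (h : var i ∉ T) : 0 < deficit T := (ncard_pos).2 ⟨i, h⟩

end MeetImpForm

open MeetImpForm

def ColTree (n : ℕ) : ℕ → Type
  | 0 => PEmpty
  | k + 1 => (Fin n → Bool) × Set (ColTree n k)

instance ColTree.finite : ∀ k, Finite (ColTree n k)
  | 0 => inferInstanceAs (Finite PEmpty)
  | k + 1 =>
    have := ColTree.finite k
    inferInstanceAs (Finite ((Fin n → Bool) × Set (ColTree n k)))

/-- Kripke satisfaction at a root coloured `c` whose immediate subtrees `A` are interpreted by `s`:
the points above the root are the root itself and the points of its subtrees. -/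
def nodeSat {X : Type} (c : Fin n → Bool) (A : Set X) (s : X → MeetImpForm n → Prop) :
    MeetImpForm n → Prop
  | .var i => c i = true
  | .and φ ψ => nodeSat c A s φ ∧ nodeSat c A s ψ
  | .imp φ ψ => (∀ a ∈ A, s a (.imp φ ψ)) ∧ (nodeSat c A s φ → nodeSat c A s ψ)

def ColTree.Sat : {k : ℕ} → ColTree n k → MeetImpForm n → Prop
  | 0, t, _ => nomatch t
  | _ + 1, t, φ => nodeSat t.1 t.2 (fun a => ColTree.Sat a) φ

theorem ColTree.sat_and {k : ℕ} (t : ColTree n k) :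
    t.Sat (φ.and ψ) ↔ t.Sat φ ∧ t.Sat ψ := by
  cases k
  · exact nomatch t
  · exact Iff.rfl

theorem ColTree.Sat.mp {k : ℕ} {t : ColTree n k} (h : t.Sat (φ.imp ψ)) : t.Sat φ → t.Sat ψ := by
  cases k
  · exact nomatch t
  · exact h.2

theorem nodeSat_iff_mem {X : Type} {T T' : Set (MeetImpForm n)} (hT : IsTheory T)
    (hTT' : T ⊆ T') (hmax : ∀ α ∉ T, T' ⊆ Cn (insert α T)) {c : Fin n → Bool}
    (hc : ∀ j, c j = true ↔ var j ∈ T) {A : Set X} {s : X → MeetImpForm n → Prop}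
    (hA : ∀ a ∈ A, ∀ ρ ∈ T', s a ρ) (hA' : ∀ ξ ∉ T', ∃ a ∈ A, ¬ s a ξ) (ρ : MeetImpForm n) :
    nodeSat c A s ρ ↔ ρ ∈ T := by
  induction ρ with
  | var j => exact hc j
  | and φ ψ ihφ ihψ => exact (and_congr ihφ ihψ).trans hT.and_mem_iff.symm
  | imp α β ihα ihβ =>
    refine ⟨fun ⟨hsub, hroot⟩ => hT.imp_mem_of_mem_Cn_insert ?_,
      fun h => ⟨fun a ha => hA a ha _ (hTT' h), fun hα => ihβ.2 (hT.mem_of_imp_mem (ihα.1 hα) h)⟩⟩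
    by_cases hα : α ∈ T
    · exact subset_Cn _ (mem_insert_of_mem _ (ihβ.1 (hroot (ihα.2 hα))))
    · have himp : α.imp β ∈ T' := by
        by_contra h
        obtain ⟨a, ha, hna⟩ := hA' _ h
        exact hna (hsub a ha)
      exact (isTheory_Cn _).mem_of_imp_mem (subset_Cn _ (mem_insert _ _)) (hmax α hα himp)

def RefutableAt (k : ℕ) (χ : MeetImpForm n) : Prop :=
  ∀ T, IsTheory T → deficit T ≤ k → χ ∉ T → ∃ t : ColTree n k, (∀ ρ ∈ T, t.Sat ρ) ∧ ¬ t.Sat χ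

theorem refutableAt_of_var {k : ℕ} (h : ∀ i, RefutableAt k (var i : MeetImpForm n)) :
    ∀ χ : MeetImpForm n, RefutableAt k χ := by
  intro χ
  induction χ with
  | var i => exact h i
  | and φ ψ ihφ ihψ =>
    intro T hT hd hχ
    rcases not_and_or.1 (hT.and_mem_iff.not.1 hχ) with hφ | hψ
    · obtain ⟨t, ht, hφt⟩ := ihφ T hT hd hφ
      exact ⟨t, ht, fun h => hφt ((ColTree.sat_and t).1 h).1⟩
    · obtain ⟨t, ht, hψt⟩ := ihψ T hT hd hψ
      exact ⟨t, ht, fun h => hψt ((ColTree.sat_and t).1 h).2⟩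
  | imp α β _ ihβ =>
    intro T hT hd hχ
    have hTα : T ⊆ Cn (insert α T) := (subset_insert α T).trans (subset_Cn _)
    obtain ⟨t, ht, hβt⟩ := ihβ _ (isTheory_Cn _) ((deficit_anti hTα).trans hd)
      fun h => hχ (hT.imp_mem_of_mem_Cn_insert h)
    exact ⟨t, fun ρ hρ => ht ρ (hTα hρ), fun h => hβt (h.mp (ht α (subset_Cn _ (mem_insert _ _))))⟩

theorem refutableAt_zero_var (i : Fin n) : RefutableAt 0 (var i) :=
  fun _ _ hd hi => absurd hd (deficit_pos hi).not_ge

theorem refutableAt_succ_var {k : ℕ} (h : ∀ χ : MeetImpForm n, RefutableAt k χ) (i : Fin n) :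
    RefutableAt (k + 1) (var i) := by
  classical
  intro T hT hd hi
  obtain ⟨Tm, hTm, hTTm, hiTm, hmax⟩ := hT.exists_maximal_notMem hi
  set T' := Cn (insert (var i) Tm)
  have hTmT' : Tm ⊆ T' := (subset_insert _ _).trans (subset_Cn _)
  have hd' : deficit T' ≤ k := by
    have := deficit_lt hTmT' hiTm (subset_Cn _ (mem_insert _ _))
    have := deficit_anti hTTm
    omega
  let t : ColTree n (k + 1) := (fun j => decide (var j ∈ Tm), {a | ∀ ρ ∈ T', a.Sat ρ})
  have ht (ρ : MeetImpForm n) : t.Sat ρ ↔ ρ ∈ Tm :=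
    nodeSat_iff_mem hTm hTmT'
      (fun α hα => (isTheory_Cn _).Cn_subset
        (insert_subset (hmax α hα) ((subset_insert _ _).trans (subset_Cn _))))
      (fun j => decide_eq_true_iff) (fun _ ha => ha)
      (fun ξ hξ => h ξ T' (isTheory_Cn _) hd' hξ) ρ
  exact ⟨t, fun ρ hρ => (ht ρ).2 (hTTm hρ), fun h => hiTm ((ht _).1 h)⟩

theorem refutableAt (k : ℕ) (χ : MeetImpForm n) : RefutableAt k χ := by
  induction k generalizing χ with
  | zero => exact refutableAt_of_var refutableAt_zero_var χ
  | succ k ih => exact refutableAt_of_var (refutableAt_succ_var ih) χ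

theorem meetImpSat_of_colTree_sat (h : ∀ t : ColTree n n, t.Sat φ → t.Sat ψ)
    (M : KripkeModel n) (x : M.W) (hφ : MeetImpSat M φ x) : MeetImpSat M ψ x := by
  by_contra hψ
  obtain ⟨t, ht, hψt⟩ := refutableAt n ψ _ (isTheory_setOf_meetImpSat M x) (deficit_le _) hψ
  exact hψt (h t (ht φ hφ))

/-- Diego's theorem, syntactic form: up to semantic equivalence over all Kripke models
on `n` variables, there are only finitely many `(∧,→)`-formulas over `n` variables. -/
theorem diego_finitely_many_meetImp_formulas (n : ℕ) :
    Finite (Quot (fun φ ψ : MeetImpForm n =>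
      ∀ (M : KripkeModel n) (x : M.W), MeetImpSat M φ x ↔ MeetImpSat M ψ x)) := by
  refine Finite.of_injective (fun q => {t : ColTree n n | t.Sat q.out}) fun q₁ q₂ h => ?_
  have hsat (t : ColTree n n) : t.Sat q₁.out ↔ t.Sat q₂.out := Set.ext_iff.1 h t
  rw [← q₁.out_eq, ← q₂.out_eq]
  exact Quot.sound fun M x => ⟨meetImpSat_of_colTree_sat (fun t => (hsat t).1) M x,
    meetImpSat_of_colTree_sat (fun t => (hsat t).2) M x⟩
end

section
/- There is no (∧,→)-formula φ in the single variable p that is semantically equivalent to ¬¬p: for every formula φ built from p using only ∧ and →, there exist a model M on one variable and a point x ∈ M such that M, x ⊨ φ does not coincide with M, x ⊨ ¬¬p (where ¬¬p abbreviates (p → ⊥) → ⊥). -/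
/-- Intuitionistic (IPC) formulas over `n` propositional variables, built from the
variables using `∧`, `∨`, `→` and `⊥`. -/
inductive IPCForm (n : ℕ) : Type
  | var (i : Fin n) : IPCForm n
  | bot : IPCForm n
  | and (φ ψ : IPCForm n) : IPCForm n
  | or (φ ψ : IPCForm n) : IPCForm n
  | imp (φ ψ : IPCForm n) : IPCForm n

/-- Kripke satisfaction of an intuitionistic formula in a model. -/
def IPCSat {n : ℕ} (M : KripkeModel n) : IPCForm n → M.W → Prop
  | .var i, x => M.col x i = true
  | .bot, _ => False
  | .and φ ψ, x => IPCSat M φ x ∧ IPCSat M ψ x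
  | .or φ ψ, x => IPCSat M φ x ∨ IPCSat M ψ x
  | .imp φ ψ, x => ∀ y : M.W, x ≤ y → IPCSat M φ y → IPCSat M ψ y

/-- The formula `¬¬p`, i.e. `(p → ⊥) → ⊥`, in the single variable `p`. -/
def notNotP : IPCForm 1 :=
  IPCForm.imp (IPCForm.imp (IPCForm.var 0) IPCForm.bot) IPCForm.bot

/-!
A `(∧,→)`-formula `φ` in the single variable `p` is equivalent either to `⊤` or to `p`,
according to its classical value at `p = ⊥`: at a point forcing `p` every point above forces
`p`, so `φ` holds there, while at a point not forcing `p` an implication is decided by the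
point itself. Neither `⊤` nor `p` is `¬¬p`: `⊤` differs from it at a single point where `p`
fails, and `p` at the bottom of the chain `false < true` with `p` forced only at the top.
-/

def MeetImpForm.eval {n : ℕ} (v : Fin n → Prop) : MeetImpForm n → Prop
  | .var i => v i
  | .and φ ψ => φ.eval v ∧ ψ.eval v
  | .imp φ ψ => φ.eval v → ψ.eval v

theorem meetImpSat_iff_col_or_eval (M : KripkeModel 1) (φ : MeetImpForm 1) (x : M.W) :
    MeetImpSat M φ x ↔ M.col x 0 = true ∨ φ.eval (fun _ => False) := by
  induction φ generalizing x with
  | var i =>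
    simp [MeetImpSat, MeetImpForm.eval, Subsingleton.elim i 0]
  | and φ ψ ihφ ihψ =>
    simp only [MeetImpSat, MeetImpForm.eval, ihφ, ihψ, or_and_left]
  | imp φ ψ ihφ ihψ =>
    simp only [MeetImpSat, MeetImpForm.eval, ihφ, ihψ]
    by_cases hx : M.col x 0 = true
    · refine iff_of_true (fun y hxy _ => Or.inl ?_) (Or.inl hx)
      exact le_antisymm (Bool.le_true _) (hx ▸ M.mono hxy 0)
    · refine ⟨fun h => Or.inr fun hφ => ?_, fun h y _ => ?_⟩
      · exact (h x le_rfl (Or.inr hφ)).resolve_left hx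
      · rintro (hy | hφ)
        exacts [Or.inl hy, Or.inr ((h.resolve_left hx) hφ)]

theorem ipcSat_notNotP_iff (M : KripkeModel 1) (x : M.W) :
    IPCSat M notNotP x ↔ ∀ y, x ≤ y → ∃ z, y ≤ z ∧ M.col z 0 = true := by
  simp [notNotP, IPCSat]

def falsePoint : KripkeModel 1 where
  W := Unit
  col _ _ := false
  mono := monotone_const

def boolChain : KripkeModel 1 where
  W := Bool
  col b _ := b
  mono _ _ h _ := h

/-- No `(∧,→)`-formula in the single variable `p` is semantically equivalent to
`¬¬p`: for every such formula there is a model on one variable and a point at which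
the two formulas disagree. -/
theorem no_meetImp_formula_equiv_notnot :
    ∀ φ : MeetImpForm 1, ∃ (M : KripkeModel 1) (x : M.W),
      ¬ (MeetImpSat M φ x ↔ IPCSat M notNotP x) := by
  intro φ
  by_cases hφ : φ.eval (fun _ => False)
  · refine ⟨falsePoint, (), fun h => ?_⟩
    have hnn := h.mp ((meetImpSat_iff_col_or_eval falsePoint φ ()).mpr (Or.inr hφ))
    obtain ⟨z, -, hz⟩ := (ipcSat_notNotP_iff _ ()).mp hnn () le_rfl
    exact Bool.false_ne_true hz
  · refine ⟨boolChain, false, fun h => ?_⟩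
    have hnn : IPCSat boolChain notNotP false :=
      (ipcSat_notNotP_iff _ _).mpr fun y _ => ⟨true, Bool.le_true y, rfl⟩
    have hp := (meetImpSat_iff_col_or_eval boolChain φ false).mp (h.mpr hnn)
    exact hp.elim Bool.false_ne_true hφ
end

section
/- Let χ be a (∧,→)-formula in the single variable p. If ¬¬p semantically implies χ, i.e. for every model M on one variable and every x ∈ M, M, x ⊨ ¬¬p implies M, x ⊨ χ (where ¬¬p abbreviates (p → ⊥) → ⊥), then χ is valid: M, x ⊨ χ for every model M on one variable and every x ∈ M. Consequently, the uniform interpolant of p → (q → p) with respect to p within the (∧,→)-fragment of IPC is the trivially true formula ⊤. -/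
/-!
Adjoin to a model a new top point at which every variable holds. Without `⊥`, every
`(∧,→)`-formula is true at such a point, so the old points satisfy the same
`(∧,→)`-formulas as before; but now every point sees a `p`-point above each of its
successors, so `¬¬p` holds everywhere and the hypothesis yields `χ`.
-/

variable {n : ℕ}

def KripkeModel.withTop (M : KripkeModel n) : KripkeModel n where
  W := WithTop M.W
  col := WithTop.recTopCoe ⊤ M.col
  mono := WithTop.monotone_iff (f := WithTop.recTopCoe ⊤ M.col) |>.2 ⟨M.mono, fun _ => le_top⟩

theorem meetImpSat_of_isMax {M : KripkeModel n} {t : M.W} (ht : IsMax t)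
    (hcol : ∀ i, M.col t i = true) (χ : MeetImpForm n) : MeetImpSat M χ t := by
  induction χ with
  | var i => exact hcol i
  | and φ ψ ihφ ihψ => exact ⟨ihφ, ihψ⟩
  | imp φ ψ _ ihψ =>
    intro y hty _
    rwa [ht.eq_of_ge hty]

theorem meetImpSat_withTop_top (M : KripkeModel n) (χ : MeetImpForm n) :
    MeetImpSat M.withTop χ (⊤ : WithTop M.W) :=
  meetImpSat_of_isMax (M := M.withTop) (isMax_top : IsMax (⊤ : WithTop M.W)) (fun _ => rfl) χ

theorem meetImpSat_withTop_coe (M : KripkeModel n) (χ : MeetImpForm n) (x : M.W) :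
    MeetImpSat M.withTop χ (x : WithTop M.W) ↔ MeetImpSat M χ x := by
  induction χ generalizing x with
  | var i => rfl
  | and φ ψ ihφ ihψ => exact and_congr (ihφ x) (ihψ x)
  | imp φ ψ ihφ ihψ =>
    constructor
    · intro h y hxy hφ
      exact (ihψ y).1 (h (y : WithTop M.W) (WithTop.coe_le_coe.2 hxy) ((ihφ y).2 hφ))
    intro h y hxy hφ
    induction y using WithTop.recTopCoe with
    | top => exact meetImpSat_withTop_top M ψ
    | coe z => exact (ihψ z).2 (h z (WithTop.coe_le_coe.1 hxy) ((ihφ z).1 hφ))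

theorem ipcSat_notNotP_of_isTop {M : KripkeModel 1} {t : M.W} (ht : IsTop t)
    (hp : M.col t 0 = true) (x : M.W) : IPCSat M notNotP x :=
  fun y _ hnp => hnp t (ht y) hp

/-- If a `(∧,→)`-formula `χ` in the single variable `p` is a semantic consequence of
`¬¬p` (over all Kripke models on one variable), then `χ` is valid. Hence the uniform
interpolant of `p → (q → p)` with respect to `p` within the `(∧,→)`-fragment of IPC
is the trivially true formula `⊤`. -/
theorem meetImp_consequence_of_notnot_is_valid (χ : MeetImpForm 1)
    (h : ∀ (M : KripkeModel 1) (x : M.W), IPCSat M notNotP x → MeetImpSat M χ x) :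
    ∀ (M : KripkeModel 1) (x : M.W), MeetImpSat M χ x := by
  intro M x
  have hnn : IPCSat M.withTop notNotP (x : WithTop M.W) :=
    ipcSat_notNotP_of_isTop (M := M.withTop) (isTop_top : IsTop (⊤ : WithTop M.W)) rfl _
  exact (meetImpSat_withTop_coe M χ x).1 (h M.withTop (x : WithTop M.W) hnn)
end
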